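/- arXiv:0811.4220 — 4 statements merged into one kernel-verified Lean document; each statement's English description precedes it below -/
import Mathlib

section
/- Let ω > 0, t ∈ ℝ with sin(ωt) ≠ 0, and define u: ℝ³ → ℂ, u(x) = exp(i ω (|x−y|²/2 · cot(ωt) − x̃·y)) for a fixed y ∈ ℝ³, where x̃ = (−x₂, x₁, (csc(ωt) − cot(ωt)) x₃). Then (1/2)Δₓ u = [ (3/2) i ω cot(ωt) − ω² cot²(ωt) |x−y|²/2 − ω² |y|²/2 + ω² cot(ωt) x̃·y ] · u, where here the Laplacian acts on x and ỹ·x uses the fixed y. -/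
open Real Complex

/-- first spatial partial derivative of a function of three real variables -/
noncomputable def pd1 (u : ℝ → ℝ → ℝ → ℂ) : ℝ → ℝ → ℝ → ℂ :=
  fun a b c => deriv (fun s => u s b c) a

noncomputable def pd2 (u : ℝ → ℝ → ℝ → ℂ) : ℝ → ℝ → ℝ → ℂ :=
  fun a b c => deriv (fun s => u a s c) b

noncomputable def pd3 (u : ℝ → ℝ → ℝ → ℂ) : ℝ → ℝ → ℝ → ℂ :=
  fun a b c => deriv (fun s => u a b s) c

/-! In each coordinate the phase of `u` is a quadratic polynomial, so each second partial
derivative of `u = exp φ` is `(∂²φ + (∂φ)²) u`. Summing, `Δu = (Δφ + |∇φ|²) u` with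
`Δφ = 3iω cot` and `∇φ = iω ((x - y) cot - g)`, `g = (y₂, -y₁, (csc - cot) y₃)`.
Expanding `|∇φ|²`, the `y`-only terms collapse to `|y|²` because
`(csc - cot)² + 2 cot (csc - cot) = csc² - cot² = 1`. -/

theorem Real.one_div_sin_sq_sub_cot_sq {x : ℝ} (hx : Real.sin x ≠ 0) :
    (1 / Real.sin x) ^ 2 - (Real.cos x / Real.sin x) ^ 2 = 1 := by
  field_simp
  linear_combination -Real.sin_sq_add_cos_sq x

theorem hasDerivAt_quadratic (k m n : ℂ) (a : ℝ) :
    HasDerivAt (fun s : ℝ => k * (s : ℂ) ^ 2 + m * s + n) (2 * k * a + m) a := by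
  have h : HasDerivAt (fun z : ℂ => k * z ^ 2 + m * z + n) (2 * k * a + m) a := by
    simpa [mul_comm, mul_left_comm, mul_assoc] using
      (((hasDerivAt_pow 2 (a : ℂ)).const_mul k).add
        ((hasDerivAt_id (a : ℂ)).const_mul m)).add_const n
  exact h.comp_ofReal

theorem deriv_cexp_quadratic (k m n : ℂ) :
    deriv (fun s : ℝ => cexp (k * (s : ℂ) ^ 2 + m * s + n)) =
      fun s : ℝ => (2 * k * s + m) * cexp (k * (s : ℂ) ^ 2 + m * s + n) := by
  funext s
  rw [(hasDerivAt_quadratic k m n s).cexp.deriv, mul_comm]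

theorem deriv_deriv_cexp_quadratic {f : ℝ → ℂ} {k m : ℂ}
    (hf : ∀ s : ℝ, f s = k * (s : ℂ) ^ 2 + m * s + f 0) (a : ℝ) :
    deriv (deriv fun s => cexp (f s)) a = (2 * k + (2 * k * a + m) ^ 2) * cexp (f a) := by
  obtain ⟨n, hn⟩ : ∃ n, f 0 = n := ⟨_, rfl⟩
  obtain rfl : f = fun s : ℝ => k * (s : ℂ) ^ 2 + m * s + n := funext (hn ▸ hf)
  have hlin : HasDerivAt (fun s : ℝ => 2 * k * (s : ℂ) + m) (2 * k) a := by
    simpa using (hasDerivAt_quadratic 0 (2 * k) m a)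
  rw [deriv_cexp_quadratic]
  exact (hlin.mul (hasDerivAt_quadratic k m n a).cexp).deriv.trans (by ring)

theorem laplacian_of_kernel_general (ω t : ℝ) (hsin : Real.sin (ω * t) ≠ 0)
    (y₁ y₂ y₃ : ℝ) :
    let cot : ℝ := Real.cos (ω * t) / Real.sin (ω * t)
    let csc : ℝ := 1 / Real.sin (ω * t)
    -- x̃·y with x̃ = (−x₂, x₁, (csc−cot)x₃)
    let xty : ℝ → ℝ → ℝ → ℝ := fun a b c => -b * y₁ + a * y₂ + (csc - cot) * c * y₃
    let u : ℝ → ℝ → ℝ → ℂ := fun a b c =>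
      Complex.exp (Complex.I * (ω : ℂ) *
        (((a - y₁) ^ 2 + (b - y₂) ^ 2 + (c - y₃) ^ 2) / 2 * (cot : ℂ) - (xty a b c : ℂ)))
    ∀ a b c : ℝ,
      (1 / 2 : ℂ) * (pd1 (pd1 u) a b c + pd2 (pd2 u) a b c + pd3 (pd3 u) a b c) =
        ((3 / 2 : ℂ) * Complex.I * ω * cot
          - (ω : ℂ) ^ 2 * (cot : ℂ) ^ 2 * (((a - y₁) ^ 2 + (b - y₂) ^ 2 + (c - y₃) ^ 2) / 2)
          - (ω : ℂ) ^ 2 * ((y₁ ^ 2 + y₂ ^ 2 + y₃ ^ 2 : ℝ) : ℂ) / 2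
          + (ω : ℂ) ^ 2 * (cot : ℂ) * (xty a b c : ℂ)) * u a b c := by
  intro cot csc xty u a b c
  have hcsc : ((csc : ℂ) - cot) ^ 2 + 2 * cot * ((csc : ℂ) - cot) = 1 := by
    exact_mod_cast (by linear_combination Real.one_div_sin_sq_sub_cot_sq hsin :
      (csc - cot) ^ 2 + 2 * cot * (csc - cot) = 1)
  have h₁ : pd1 (pd1 u) a b c =
      (I * ω * cot + (I * ω * ((a - y₁) * cot - y₂)) ^ 2) * u a b c :=
    (deriv_deriv_cexp_quadratic (k := I * ω * cot / 2)
      (m := I * ω * (-y₁ * cot - y₂)) (fun s => by simp only [xty]; push_cast; ring) a).trans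
      (congrArg (· * u a b c) (by ring))
  have h₂ : pd2 (pd2 u) a b c =
      (I * ω * cot + (I * ω * ((b - y₂) * cot + y₁)) ^ 2) * u a b c :=
    (deriv_deriv_cexp_quadratic (k := I * ω * cot / 2)
      (m := I * ω * (-y₂ * cot + y₁)) (fun s => by simp only [xty]; push_cast; ring) b).trans
      (congrArg (· * u a b c) (by ring))
  have h₃ : pd3 (pd3 u) a b c =
      (I * ω * cot + (I * ω * ((c - y₃) * cot - (csc - cot) * y₃)) ^ 2) * u a b c :=
    (deriv_deriv_cexp_quadratic (k := I * ω * cot / 2)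
      (m := I * ω * (-y₃ * cot - (csc - cot) * y₃))
      (fun s => by simp only [xty]; push_cast; ring) c).trans
      (congrArg (· * u a b c) (by ring))
  rw [h₁, h₂, h₃]
  simp only [xty, mul_pow, I_sq]
  push_cast
  linear_combination (-(ω : ℂ) ^ 2 * y₃ ^ 2 / 2 * u a b c) * hcsc

theorem laplacian_of_kernel (ω t : ℝ) (hω : 0 < ω) (hsin : Real.sin (ω * t) ≠ 0)
    (y₁ y₂ y₃ : ℝ) :
    let cot : ℝ := Real.cos (ω * t) / Real.sin (ω * t)
    let csc : ℝ := 1 / Real.sin (ω * t)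
    -- x̃·y with x̃ = (−x₂, x₁, (csc−cot)x₃)
    let xty : ℝ → ℝ → ℝ → ℝ := fun a b c => -b * y₁ + a * y₂ + (csc - cot) * c * y₃
    let u : ℝ → ℝ → ℝ → ℂ := fun a b c =>
      Complex.exp (Complex.I * (ω : ℂ) *
        (((a - y₁) ^ 2 + (b - y₂) ^ 2 + (c - y₃) ^ 2) / 2 * (cot : ℂ) - (xty a b c : ℂ)))
    ∀ a b c : ℝ,
      (1 / 2 : ℂ) * (pd1 (pd1 u) a b c + pd2 (pd2 u) a b c + pd3 (pd3 u) a b c) =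
        ((3 / 2 : ℂ) * Complex.I * ω * cot
          - (ω : ℂ) ^ 2 * (cot : ℂ) ^ 2 * (((a - y₁) ^ 2 + (b - y₂) ^ 2 + (c - y₃) ^ 2) / 2)
          - (ω : ℂ) ^ 2 * ((y₁ ^ 2 + y₂ ^ 2 + y₃ ^ 2 : ℝ) : ℂ) / 2
          + (ω : ℂ) ^ 2 * (cot : ℂ) * (xty a b c : ℂ)) * u a b c :=
  laplacian_of_kernel_general ω t hsin y₁ y₂ y₃
end

section
/- Let ω > 0 and t with sin(ωt) ≠ 0, fix y ∈ ℝ³, and define K(x) = exp(iω(|x−y|²/2·cot(ωt) − x̃·y)) with x̃ = (−x₂, x₁, (csc(ωt)−cot(ωt))x₃). Then the operator ωL_z applied to K, where L_z = i(x₂∂_{x₁} − x₁∂_{x₂}), equals ω²[(x₂y₁ − x₁y₂)cot(ωt) + x₁y₁ + x₂y₂]·K. -/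
/-! The kernel is `K = exp (i ω Φ)` with a real quadratic phase `Φ`, so every partial derivative
of `K` is `i ω (∂Φ) K`, and `L_z K = -ω (x₂ ∂₁Φ - x₁ ∂₂Φ) K`. In `x₂ ∂₁Φ - x₁ ∂₂Φ` the terms
`x₁ x₂ cot(ωt)` coming from `|x - y|²` cancel, leaving a polynomial of degree one in `x`. -/

open Real Complex

section PhaseExponential

variable {κ : ℂ} {φ : ℝ → ℝ → ℝ → ℝ} {a b c φ' : ℝ}

theorem pd1_cexp_mul_ofReal (h : HasDerivAt (fun s => φ s b c) φ' a) :
    pd1 (fun a b c => Complex.exp (κ * φ a b c)) a b c = κ * φ' * Complex.exp (κ * φ a b c) := by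
  rw [pd1, (h.ofReal_comp.const_mul κ).cexp.deriv]
  ring

theorem pd2_cexp_mul_ofReal (h : HasDerivAt (fun s => φ a s c) φ' b) :
    pd2 (fun a b c => Complex.exp (κ * φ a b c)) a b c = κ * φ' * Complex.exp (κ * φ a b c) := by
  rw [pd2, (h.ofReal_comp.const_mul κ).cexp.deriv]
  ring

end PhaseExponential

/-- The phase `|x - y|²/2 · m - x̃ · y` of the kernel, where `m` stands for `cot(ωt)` and `n` for
`csc(ωt) - cot(ωt)`, so that `x̃ = (-x₂, x₁, n x₃)`. -/
noncomputable def kernelPhase (m n y₁ y₂ y₃ : ℝ) (a b c : ℝ) : ℝ :=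
  ((a - y₁) ^ 2 + (b - y₂) ^ 2 + (c - y₃) ^ 2) / 2 * m - (-b * y₁ + a * y₂ + n * c * y₃)

section KernelPhase

variable (m n y₁ y₂ y₃ a b c : ℝ)

theorem hasDerivAt_kernelPhase_fst :
    HasDerivAt (fun s => kernelPhase m n y₁ y₂ y₃ s b c) ((a - y₁) * m - y₂) a := by
  have h := ((((hasDerivAt_id' a).sub_const y₁).pow 2).add_const ((b - y₂) ^ 2 + (c - y₃) ^ 2)
    |>.div_const 2 |>.mul_const m).sub (((hasDerivAt_id' a).mul_const y₂).const_add (-b * y₁)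
    |>.add_const (n * c * y₃))
  refine (h.congr_deriv (by ring)).congr_of_eventuallyEq (.of_forall fun s => ?_)
  simp only [kernelPhase, Pi.sub_apply, Pi.pow_apply]
  ring

theorem hasDerivAt_kernelPhase_snd :
    HasDerivAt (fun s => kernelPhase m n y₁ y₂ y₃ a s c) ((b - y₂) * m + y₁) b := by
  have h := ((((hasDerivAt_id' b).sub_const y₂).pow 2).const_add ((a - y₁) ^ 2)
    |>.add_const ((c - y₃) ^ 2) |>.div_const 2 |>.mul_const m).sub
    ((((hasDerivAt_id' b).neg.mul_const y₁).add_const (a * y₂)).add_const (n * c * y₃))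
  refine (h.congr_deriv (by ring)).congr_of_eventuallyEq (.of_forall fun s => ?_)
  simp only [kernelPhase, Pi.sub_apply, Pi.pow_apply, Pi.neg_apply]

end KernelPhase

theorem angular_momentum_on_kernel_general (ω t : ℝ)
    (y₁ y₂ y₃ : ℝ) :
    let cot : ℝ := Real.cos (ω * t) / Real.sin (ω * t)
    let csc : ℝ := 1 / Real.sin (ω * t)
    let xty : ℝ → ℝ → ℝ → ℝ := fun a b c => -b * y₁ + a * y₂ + (csc - cot) * c * y₃
    let K : ℝ → ℝ → ℝ → ℂ := fun a b c =>
      Complex.exp (Complex.I * (ω : ℂ) *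
        (((a - y₁) ^ 2 + (b - y₂) ^ 2 + (c - y₃) ^ 2) / 2 * (cot : ℂ) - (xty a b c : ℂ)))
    ∀ a b c : ℝ,
      (ω : ℂ) * (Complex.I * ((b : ℂ) * pd1 K a b c - (a : ℂ) * pd2 K a b c)) =
        (ω : ℂ) ^ 2 * (((b * y₁ - a * y₂) * cot + a * y₁ + b * y₂ : ℝ) : ℂ) * K a b c := by
  intro cot csc xty K a b c
  have hK : K = fun a b c =>
      Complex.exp (Complex.I * ω * kernelPhase cot (csc - cot) y₁ y₂ y₃ a b c) := by
    ext a b c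
    simp only [K, xty, kernelPhase]
    push_cast
    rfl
  rw [hK, pd1_cexp_mul_ofReal (hasDerivAt_kernelPhase_fst ..),
    pd2_cexp_mul_ofReal (hasDerivAt_kernelPhase_snd ..)]
  push_cast
  linear_combination (-(ω : ℂ) ^ 2 * ((b * y₁ - a * y₂) * cot + a * y₁ + b * y₂) *
    Complex.exp (Complex.I * ω * kernelPhase cot (csc - cot) y₁ y₂ y₃ a b c)) * Complex.I_sq

theorem angular_momentum_on_kernel (ω t : ℝ) (hω : 0 < ω) (hsin : Real.sin (ω * t) ≠ 0)
    (y₁ y₂ y₃ : ℝ) :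
    let cot : ℝ := Real.cos (ω * t) / Real.sin (ω * t)
    let csc : ℝ := 1 / Real.sin (ω * t)
    let xty : ℝ → ℝ → ℝ → ℝ := fun a b c => -b * y₁ + a * y₂ + (csc - cot) * c * y₃
    let K : ℝ → ℝ → ℝ → ℂ := fun a b c =>
      Complex.exp (Complex.I * (ω : ℂ) *
        (((a - y₁) ^ 2 + (b - y₂) ^ 2 + (c - y₃) ^ 2) / 2 * (cot : ℂ) - (xty a b c : ℂ)))
    ∀ a b c : ℝ,
      (ω : ℂ) * (Complex.I * ((b : ℂ) * pd1 K a b c - (a : ℂ) * pd2 K a b c)) =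
        (ω : ℂ) ^ 2 * (((b * y₁ - a * y₂) * cot + a * y₁ + b * y₂ : ℝ) : ℂ) * K a b c :=
  angular_momentum_on_kernel_general ω t y₁ y₂ y₃
end

section
/- Let ω > 0 and t with sin(ωt) ≠ 0, fix y ∈ ℝ³, and let K(x) = exp(iω(|x−y|²/2·cot(ωt) − x̃·y)) with x̃ = (−x₂, x₁, (csc(ωt)−cot(ωt))x₃). Then i∂ₜK + (1/2)ΔK − (ω²/2)|x|²K + ω·i(x₂∂_{x₁} − x₁∂_{x₂})K = (3/2)iω cot(ωt) K, i.e. the kernel solves the linear rotating harmonic oscillator equation up to the factor coming from the time-dependent amplitude (sin ωt)^{-3/2}. -/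
/-!
Write the kernel as `K = exp (i ω Φ)` with a real phase `Φ`. Then
`i ∂ₜK + ½ ΔK - (ω²/2)|x|² K + i ω (x₂ ∂₁ - x₁ ∂₂) K`
equals `(i ω/2 · ΔΦ - ω² H) K`, where `H = Φₜ/ω + ½|∇Φ|² + ½|x|² + x₂ ∂₁Φ - x₁ ∂₂Φ`.
Each coordinate slice of `Φ` is a quadratic polynomial with leading coefficient `cot(ωt)/2`, so
`ΔΦ = 3 cot(ωt)`, while `H = 0` is the Hamilton–Jacobi equation of the phase; after computing
`∂ₜ cot(ωt) = -ω csc²(ωt)` and `∂ₜ csc(ωt) = -ω csc(ωt) cot(ωt)` it reduces to `csc² = 1 + cot²`.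
-/

open Real Complex

noncomputable def Dt (u : ℝ → ℝ → ℝ → ℝ → ℂ) : ℝ → ℝ → ℝ → ℝ → ℂ :=
  fun t a b c => deriv (fun s => u s a b c) t

noncomputable def D1 (u : ℝ → ℝ → ℝ → ℝ → ℂ) : ℝ → ℝ → ℝ → ℝ → ℂ :=
  fun t a b c => deriv (fun s => u t s b c) a

noncomputable def D2 (u : ℝ → ℝ → ℝ → ℝ → ℂ) : ℝ → ℝ → ℝ → ℝ → ℂ :=
  fun t a b c => deriv (fun s => u t a s c) b

noncomputable def D3 (u : ℝ → ℝ → ℝ → ℝ → ℂ) : ℝ → ℝ → ℝ → ℝ → ℂ :=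
  fun t a b c => deriv (fun s => u t a b s) c

theorem HasDerivAt.cexp_I_mul_ofReal (ω : ℝ) {g : ℝ → ℝ} {g' x : ℝ} (hg : HasDerivAt g g' x) :
    HasDerivAt (fun s => Complex.exp (I * ω * (g s : ℂ)))
      (I * ω * g' * Complex.exp (I * ω * (g x : ℂ))) x :=
  (hg.ofReal_comp.const_mul (I * ω)).cexp.congr_deriv (by ring)

theorem hasDerivAt_quadratic_s9 (p q r x : ℝ) :
    HasDerivAt (fun s => p * s ^ 2 + q * s + r) (2 * p * x + q) x :=
  ((((hasDerivAt_pow 2 x).const_mul p).add ((hasDerivAt_id x).const_mul q)).add_const r).congr_deriv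
    (by simp only [Nat.cast_ofNat]; ring)

noncomputable def cexpQuadraticPhase (ω p q r : ℝ) : ℝ → ℂ :=
  fun s => Complex.exp (I * ω * ((p * s ^ 2 + q * s + r : ℝ) : ℂ))

section QuadraticPhase

variable (ω p q r : ℝ)

theorem hasDerivAt_cexpQuadraticPhase (x : ℝ) :
    HasDerivAt (cexpQuadraticPhase ω p q r)
      (I * ω * ((2 * p * x + q : ℝ) : ℂ) * cexpQuadraticPhase ω p q r x) x :=
  (hasDerivAt_quadratic_s9 p q r x).cexp_I_mul_ofReal ω

theorem deriv_cexpQuadraticPhase :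
    deriv (cexpQuadraticPhase ω p q r) =
      fun x => I * ω * ((2 * p * x + q : ℝ) : ℂ) * cexpQuadraticPhase ω p q r x :=
  funext fun x => (hasDerivAt_cexpQuadraticPhase ω p q r x).deriv

theorem deriv_deriv_cexpQuadraticPhase (x : ℝ) :
    deriv (deriv (cexpQuadraticPhase ω p q r)) x =
      (I * ω * (2 * p) - ω ^ 2 * (2 * p * x + q) ^ 2) * cexpQuadraticPhase ω p q r x := by
  have hlin : HasDerivAt (fun s : ℝ => ((2 * p * s + q : ℝ) : ℂ)) ((2 * p : ℝ) : ℂ) x := by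
    simpa using (((hasDerivAt_id x).const_mul (2 * p)).add_const q).ofReal_comp
  rw [deriv_cexpQuadraticPhase]
  refine ((hlin.const_mul (I * ω)).mul (hasDerivAt_cexpQuadraticPhase ω p q r x)).deriv.trans ?_
  push_cast
  linear_combination (ω * (2 * p * x + q)) ^ 2 * cexpQuadraticPhase ω p q r x * I_sq

end QuadraticPhase

noncomputable def cotAt (ω τ : ℝ) : ℝ := Real.cos (ω * τ) / Real.sin (ω * τ)

noncomputable def cscAt (ω τ : ℝ) : ℝ := 1 / Real.sin (ω * τ)

section Trigonometric

variable {ω t : ℝ}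

theorem cscAt_sq (hs : Real.sin (ω * t) ≠ 0) : cscAt ω t ^ 2 = cotAt ω t ^ 2 + 1 := by
  simp only [cscAt, cotAt]
  field_simp
  linear_combination -Real.sin_sq_add_cos_sq (ω * t)

theorem hasDerivAt_cotAt (hs : Real.sin (ω * t) ≠ 0) :
    HasDerivAt (cotAt ω) (-(ω * cscAt ω t ^ 2)) t := by
  refine (((Real.hasDerivAt_cos _).comp t (hasDerivAt_const_mul ω)).div
    ((Real.hasDerivAt_sin _).comp t (hasDerivAt_const_mul ω)) hs).congr_deriv ?_
  simp only [cscAt, Function.comp_apply]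
  field_simp
  linear_combination -ω * Real.sin_sq_add_cos_sq (ω * t)

theorem hasDerivAt_cscAt (hs : Real.sin (ω * t) ≠ 0) :
    HasDerivAt (cscAt ω) (-(ω * cscAt ω t * cotAt ω t)) t := by
  refine ((hasDerivAt_const t (1 : ℝ)).div
    ((Real.hasDerivAt_sin _).comp t (hasDerivAt_const_mul ω)) hs).congr_deriv ?_
  simp only [cscAt, cotAt, Function.comp_apply]
  field_simp
  ring

end Trigonometric

section RotatingKernel

variable (ω y₁ y₂ y₃ : ℝ)

noncomputable def rotatingKernelPhase (τ a b c : ℝ) : ℝ :=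
  ((a - y₁) ^ 2 + (b - y₂) ^ 2 + (c - y₃) ^ 2) / 2 * cotAt ω τ
    - (-b * y₁ + a * y₂ + (cscAt ω τ - cotAt ω τ) * c * y₃)

noncomputable def rotatingKernel (τ a b c : ℝ) : ℂ :=
  Complex.exp (I * ω * (rotatingKernelPhase ω y₁ y₂ y₃ τ a b c : ℂ))

theorem exists_rotatingKernel_fst_eq_cexpQuadraticPhase (τ b c : ℝ) :
    ∃ r, (fun s => rotatingKernel ω y₁ y₂ y₃ τ s b c) =
      cexpQuadraticPhase ω (cotAt ω τ / 2) (-(cotAt ω τ * y₁ + y₂)) r :=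
  ⟨(y₁ ^ 2 + (b - y₂) ^ 2 + (c - y₃) ^ 2) / 2 * cotAt ω τ + b * y₁
      - (cscAt ω τ - cotAt ω τ) * c * y₃,
    funext fun s => by
      simp only [rotatingKernel, rotatingKernelPhase, cexpQuadraticPhase]
      ring_nf⟩

theorem exists_rotatingKernel_snd_eq_cexpQuadraticPhase (τ a c : ℝ) :
    ∃ r, (fun s => rotatingKernel ω y₁ y₂ y₃ τ a s c) =
      cexpQuadraticPhase ω (cotAt ω τ / 2) (y₁ - cotAt ω τ * y₂) r :=
  ⟨((a - y₁) ^ 2 + y₂ ^ 2 + (c - y₃) ^ 2) / 2 * cotAt ω τ - a * y₂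
      - (cscAt ω τ - cotAt ω τ) * c * y₃,
    funext fun s => by
      simp only [rotatingKernel, rotatingKernelPhase, cexpQuadraticPhase]
      ring_nf⟩

theorem exists_rotatingKernel_thd_eq_cexpQuadraticPhase (τ a b : ℝ) :
    ∃ r, (fun s => rotatingKernel ω y₁ y₂ y₃ τ a b s) =
      cexpQuadraticPhase ω (cotAt ω τ / 2) (-(cscAt ω τ * y₃)) r :=
  ⟨((a - y₁) ^ 2 + (b - y₂) ^ 2 + y₃ ^ 2) / 2 * cotAt ω τ + b * y₁ - a * y₂,
    funext fun s => by
      simp only [rotatingKernel, rotatingKernelPhase, cexpQuadraticPhase]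
      ring_nf⟩

theorem hasDerivAt_rotatingKernel_time {t : ℝ} (a b c : ℝ) (hs : Real.sin (ω * t) ≠ 0) :
    HasDerivAt (fun τ => rotatingKernel ω y₁ y₂ y₃ τ a b c)
      (I * ω * ((-ω * (cscAt ω t ^ 2 * ((a - y₁) ^ 2 + (b - y₂) ^ 2 + (c - y₃) ^ 2) / 2
        + (cscAt ω t ^ 2 - cscAt ω t * cotAt ω t) * c * y₃) : ℝ) : ℂ)
        * rotatingKernel ω y₁ y₂ y₃ t a b c) t :=
  HasDerivAt.cexp_I_mul_ofReal ω <| (((hasDerivAt_cotAt hs).const_mul _).sub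
    ((((hasDerivAt_cscAt hs).sub (hasDerivAt_cotAt hs)).mul_const c).mul_const y₃
      |>.const_add _)).congr_deriv (by ring)

end RotatingKernel

theorem hamiltonJacobi_identity {C S : ℝ} (hS : S ^ 2 = C ^ 2 + 1) (a b c y₁ y₂ y₃ : ℝ) :
    -(S ^ 2 * ((a - y₁) ^ 2 + (b - y₂) ^ 2 + (c - y₃) ^ 2) / 2 + (S ^ 2 - S * C) * c * y₃)
      + ((C * (a - y₁) - y₂) ^ 2 + (C * (b - y₂) + y₁) ^ 2 + (C * c - S * y₃) ^ 2) / 2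
      + (a ^ 2 + b ^ 2 + c ^ 2) / 2 + (b * (C * (a - y₁) - y₂) - a * (C * (b - y₂) + y₁)) = 0 := by
  linear_combination -((a - y₁) ^ 2 + (b - y₂) ^ 2 + c ^ 2) / 2 * hS

theorem kernel_solves_equation_up_to_amplitude_general (ω : ℝ) (y₁ y₂ y₃ : ℝ) :
    let cot : ℝ → ℝ := fun τ => Real.cos (ω * τ) / Real.sin (ω * τ)
    let csc : ℝ → ℝ := fun τ => 1 / Real.sin (ω * τ)
    let K : ℝ → ℝ → ℝ → ℝ → ℂ := fun τ a b c =>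
      Complex.exp (Complex.I * (ω : ℂ) *
        ((((a - y₁) ^ 2 + (b - y₂) ^ 2 + (c - y₃) ^ 2) / 2 * cot τ
          - (-b * y₁ + a * y₂ + (csc τ - cot τ) * c * y₃) : ℝ) : ℂ))
    ∀ t a b c : ℝ, Real.sin (ω * t) ≠ 0 →
      Complex.I * Dt K t a b c
        + (1 / 2 : ℂ) * (D1 (D1 K) t a b c + D2 (D2 K) t a b c + D3 (D3 K) t a b c)
        - ((ω : ℂ) ^ 2 / 2) * ((a ^ 2 + b ^ 2 + c ^ 2 : ℝ) : ℂ) * K t a b c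
        + (ω : ℂ) * (Complex.I * ((b : ℂ) * D1 K t a b c - (a : ℂ) * D2 K t a b c)) =
      (3 / 2 : ℂ) * Complex.I * (ω : ℂ) * (cot t : ℂ) * K t a b c := by
  intro cot csc K t a b c hs
  obtain ⟨r₁, h₁⟩ := exists_rotatingKernel_fst_eq_cexpQuadraticPhase ω y₁ y₂ y₃ t b c
  obtain ⟨r₂, h₂⟩ := exists_rotatingKernel_snd_eq_cexpQuadraticPhase ω y₁ y₂ y₃ t a c
  obtain ⟨r₃, h₃⟩ := exists_rotatingKernel_thd_eq_cexpQuadraticPhase ω y₁ y₂ y₃ t a b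
  have hK : K = rotatingKernel ω y₁ y₂ y₃ := rfl
  have hcot : cot = cotAt ω := rfl
  have hDt := (hasDerivAt_rotatingKernel_time ω y₁ y₂ y₃ a b c hs).deriv
  have hHJ := hamiltonJacobi_identity (cscAt_sq hs) a b c y₁ y₂ y₃
  simp only [Dt, D1, D2, D3, hK, hcot]
  rw [hDt, h₁, h₂, h₃, deriv_deriv_cexpQuadraticPhase, deriv_deriv_cexpQuadraticPhase,
    deriv_deriv_cexpQuadraticPhase]
  simp only [deriv_cexpQuadraticPhase, ← congrFun h₁ a, ← congrFun h₂ b, ← congrFun h₃ c]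
  replace hHJ := congrArg ((↑) : ℝ → ℂ) hHJ
  push_cast at hHJ ⊢
  -- modulo the Hamilton–Jacobi identity, the two sides differ by a multiple of `I ^ 2 + 1`
  linear_combination (norm := ring_nf) (-(ω : ℂ) ^ 2 * rotatingKernel ω y₁ y₂ y₃ t a b c) * hHJ
  simp only [I_sq]
  ring

theorem kernel_solves_equation_up_to_amplitude (ω : ℝ) (hω : 0 < ω) (y₁ y₂ y₃ : ℝ) :
    let cot : ℝ → ℝ := fun τ => Real.cos (ω * τ) / Real.sin (ω * τ)
    let csc : ℝ → ℝ := fun τ => 1 / Real.sin (ω * τ)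
    let K : ℝ → ℝ → ℝ → ℝ → ℂ := fun τ a b c =>
      Complex.exp (Complex.I * (ω : ℂ) *
        ((((a - y₁) ^ 2 + (b - y₂) ^ 2 + (c - y₃) ^ 2) / 2 * cot τ
          - (-b * y₁ + a * y₂ + (csc τ - cot τ) * c * y₃) : ℝ) : ℂ))
    ∀ t a b c : ℝ, Real.sin (ω * t) ≠ 0 →
      Complex.I * Dt K t a b c
        + (1 / 2 : ℂ) * (D1 (D1 K) t a b c + D2 (D2 K) t a b c + D3 (D3 K) t a b c)
        - ((ω : ℂ) ^ 2 / 2) * ((a ^ 2 + b ^ 2 + c ^ 2 : ℝ) : ℂ) * K t a b c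
        + (ω : ℂ) * (Complex.I * ((b : ℂ) * D1 K t a b c - (a : ℂ) * D2 K t a b c)) =
      (3 / 2 : ℂ) * Complex.I * (ω : ℂ) * (cot t : ℂ) * K t a b c :=
  kernel_solves_equation_up_to_amplitude_general ω y₁ y₂ y₃
end

section
/- Let ω > 0, t with cos(ωt) ≠ 0 and sin(ωt) ≠ 0, and define M(t) = exp(−iω|x|² tan(ωt)/2) and Q(t) = exp(iω|x|² cot(ωt)/2) as multiplication operators on ℝ³. Then J(t) = −i cos(ωt) M(t)(cos(ωt)∇ + sin(ωt)∇̆)M(−t) and H(t) = i sin(ωt) Q(t)(cos(ωt)∇ + sin(ωt)∇̆)Q(−t), where J, H, ∇̆ are as defined from x̆ = (−x₂, x₁, (cot ωt − csc ωt)x₃) and ∇̆ = (−∂_{x₂}, ∂_{x₁}, (cot ωt − csc ωt)∂_{x₃}). -/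
open Real Complex

lemma pd1_exp_mul (k : ℂ) (u : ℝ → ℝ → ℝ → ℂ)
    (hsmooth : ContDiff ℝ (⊤ : ℕ∞) (fun p : ℝ × ℝ × ℝ => u p.1 p.2.1 p.2.2)) (a b c : ℝ) :
    pd1 (fun x y z => Complex.exp (k * ((x ^ 2 + y ^ 2 + z ^ 2 : ℝ) : ℂ)) * u x y z) a b c
      = Complex.exp (k * ((a ^ 2 + b ^ 2 + c ^ 2 : ℝ) : ℂ))
          * (k * (2 * a) * u a b c + pd1 u a b c) := by
  have hu : DifferentiableAt ℝ (fun s => u s b c) a := by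
    have h := hsmooth.differentiable (by simp)
    have : (fun s : ℝ => u s b c)
        = (fun p : ℝ × ℝ × ℝ => u p.1 p.2.1 p.2.2) ∘ (fun s => (s, b, c)) := rfl
    rw [this]
    exact (h.comp (differentiable_id.prodMk (differentiable_const _))).differentiableAt
  have hx : HasDerivAt (fun s : ℝ => ((s ^ 2 + b ^ 2 + c ^ 2 : ℝ) : ℂ)) ((2 * a : ℝ) : ℂ) a := by
    have h0 : HasDerivAt (fun s : ℝ => s ^ 2 + b ^ 2 + c ^ 2) (2 * a) a := by
      have := (hasDerivAt_pow 2 a).add_const (b ^ 2 + c ^ 2)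
      norm_num at this
      simpa [mul_comm, add_assoc] using this
    exact h0.ofReal_comp
  have h := (((hx.const_mul k).cexp).mul hu.hasDerivAt)
  simp only [pd1]
  rw [show deriv (fun s : ℝ => Complex.exp (k * ((s ^ 2 + b ^ 2 + c ^ 2 : ℝ) : ℂ)) * u s b c) a = _ from h.deriv]
  push_cast
  ring

lemma pd2_exp_mul (k : ℂ) (u : ℝ → ℝ → ℝ → ℂ)
    (hsmooth : ContDiff ℝ (⊤ : ℕ∞) (fun p : ℝ × ℝ × ℝ => u p.1 p.2.1 p.2.2)) (a b c : ℝ) :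
    pd2 (fun x y z => Complex.exp (k * ((x ^ 2 + y ^ 2 + z ^ 2 : ℝ) : ℂ)) * u x y z) a b c
      = Complex.exp (k * ((a ^ 2 + b ^ 2 + c ^ 2 : ℝ) : ℂ))
          * (k * (2 * b) * u a b c + pd2 u a b c) := by
  have hu : DifferentiableAt ℝ (fun s => u a s c) b := by
    have h := hsmooth.differentiable (by simp)
    have : (fun s : ℝ => u a s c)
        = (fun p : ℝ × ℝ × ℝ => u p.1 p.2.1 p.2.2) ∘ (fun s => (a, s, c)) := rfl
    rw [this]
    exact (h.comp ((differentiable_const _).prodMk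
      (differentiable_id.prodMk (differentiable_const _)))).differentiableAt
  have hx : HasDerivAt (fun s : ℝ => ((a ^ 2 + s ^ 2 + c ^ 2 : ℝ) : ℂ)) ((2 * b : ℝ) : ℂ) b := by
    have h0 : HasDerivAt (fun s : ℝ => a ^ 2 + s ^ 2 + c ^ 2) (2 * b) b := by
      have := ((hasDerivAt_pow 2 b).add_const (c ^ 2)).const_add (a ^ 2)
      norm_num at this
      simpa [mul_comm, add_assoc] using this
    exact h0.ofReal_comp
  have h := (((hx.const_mul k).cexp).mul hu.hasDerivAt)
  simp only [pd2]
  rw [show deriv (fun s : ℝ => Complex.exp (k * ((a ^ 2 + s ^ 2 + c ^ 2 : ℝ) : ℂ)) * u a s c) b = _ from h.deriv]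
  push_cast
  ring

lemma pd3_exp_mul (k : ℂ) (u : ℝ → ℝ → ℝ → ℂ)
    (hsmooth : ContDiff ℝ (⊤ : ℕ∞) (fun p : ℝ × ℝ × ℝ => u p.1 p.2.1 p.2.2)) (a b c : ℝ) :
    pd3 (fun x y z => Complex.exp (k * ((x ^ 2 + y ^ 2 + z ^ 2 : ℝ) : ℂ)) * u x y z) a b c
      = Complex.exp (k * ((a ^ 2 + b ^ 2 + c ^ 2 : ℝ) : ℂ))
          * (k * (2 * c) * u a b c + pd3 u a b c) := by
  have hu : DifferentiableAt ℝ (fun s => u a b s) c := by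
    have h := hsmooth.differentiable (by simp)
    have : (fun s : ℝ => u a b s)
        = (fun p : ℝ × ℝ × ℝ => u p.1 p.2.1 p.2.2) ∘ (fun s => (a, b, s)) := rfl
    rw [this]
    exact (h.comp ((differentiable_const _).prodMk
      ((differentiable_const _).prodMk differentiable_id))).differentiableAt
  have hx : HasDerivAt (fun s : ℝ => ((a ^ 2 + b ^ 2 + s ^ 2 : ℝ) : ℂ)) ((2 * c : ℝ) : ℂ) c := by
    have h0 : HasDerivAt (fun s : ℝ => a ^ 2 + b ^ 2 + s ^ 2) (2 * c) c := by
      have := (hasDerivAt_pow 2 c).const_add (a ^ 2 + b ^ 2)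
      norm_num at this
      simpa [mul_comm, add_assoc] using this
    exact h0.ofReal_comp
  have h := (((hx.const_mul k).cexp).mul hu.hasDerivAt)
  simp only [pd3]
  rw [show deriv (fun s : ℝ => Complex.exp (k * ((a ^ 2 + b ^ 2 + s ^ 2 : ℝ) : ℂ)) * u a b s) c = _ from h.deriv]
  push_cast
  ring

theorem JH_factorization (ω t : ℝ) (hω : 0 < ω)
    (hcos : Real.cos (ω * t) ≠ 0) (hsin : Real.sin (ω * t) ≠ 0)
    (u : ℝ → ℝ → ℝ → ℂ)
    (hsmooth : ContDiff ℝ (⊤ : ℕ∞) (fun p : ℝ × ℝ × ℝ => u p.1 p.2.1 p.2.2)) :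
    let co : ℝ := Real.cos (ω * t)
    let si : ℝ := Real.sin (ω * t)
    let cc : ℝ := co / si - 1 / si  -- cot(ωt) − csc(ωt)
    -- M(t) and M(−t) as multiplication operators (tan(−ωt) = −tan(ωt))
    let M : ℝ → ℝ → ℝ → ℂ := fun a b c =>
      Complex.exp (-Complex.I * (ω : ℂ) * ((a ^ 2 + b ^ 2 + c ^ 2 : ℝ) : ℂ)
        * (Real.tan (ω * t) : ℂ) / 2)
    let Mneg : ℝ → ℝ → ℝ → ℂ := fun a b c =>
      Complex.exp (Complex.I * (ω : ℂ) * ((a ^ 2 + b ^ 2 + c ^ 2 : ℝ) : ℂ)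
        * (Real.tan (ω * t) : ℂ) / 2)
    -- Q(t) and Q(−t) as multiplication operators (cot(−ωt) = −cot(ωt))
    let Q : ℝ → ℝ → ℝ → ℂ := fun a b c =>
      Complex.exp (Complex.I * (ω : ℂ) * ((a ^ 2 + b ^ 2 + c ^ 2 : ℝ) : ℂ)
        * ((co / si : ℝ) : ℂ) / 2)
    let Qneg : ℝ → ℝ → ℝ → ℂ := fun a b c =>
      Complex.exp (-Complex.I * (ω : ℂ) * ((a ^ 2 + b ^ 2 + c ^ 2 : ℝ) : ℂ)
        * ((co / si : ℝ) : ℂ) / 2)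
    -- components of D(t) = cos(ωt)∇ + sin(ωt)∇̆
    let Dop1 : (ℝ → ℝ → ℝ → ℂ) → ℝ → ℝ → ℝ → ℂ := fun v a b c =>
      (co : ℂ) * pd1 v a b c - (si : ℂ) * pd2 v a b c
    let Dop2 : (ℝ → ℝ → ℝ → ℂ) → ℝ → ℝ → ℝ → ℂ := fun v a b c =>
      (co : ℂ) * pd2 v a b c + (si : ℂ) * pd1 v a b c
    let Dop3 : (ℝ → ℝ → ℝ → ℂ) → ℝ → ℝ → ℝ → ℂ := fun v a b c =>
      ((co + si * cc : ℝ) : ℂ) * pd3 v a b c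
    -- components of J(t) and H(t)
    let J1 : ℝ → ℝ → ℝ → ℂ := fun a b c =>
      ((ω * si * (co * a + si * (-b)) : ℝ) : ℂ) * u a b c
        - Complex.I * (co : ℂ) * Dop1 u a b c
    let J2 : ℝ → ℝ → ℝ → ℂ := fun a b c =>
      ((ω * si * (co * b + si * a) : ℝ) : ℂ) * u a b c
        - Complex.I * (co : ℂ) * Dop2 u a b c
    let J3 : ℝ → ℝ → ℝ → ℂ := fun a b c =>
      ((ω * si * (co + si * cc) * c : ℝ) : ℂ) * u a b c
        - Complex.I * (co : ℂ) * Dop3 u a b c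
    let H1 : ℝ → ℝ → ℝ → ℂ := fun a b c =>
      ((ω * co * (co * a + si * (-b)) : ℝ) : ℂ) * u a b c
        + Complex.I * (si : ℂ) * Dop1 u a b c
    let H2 : ℝ → ℝ → ℝ → ℂ := fun a b c =>
      ((ω * co * (co * b + si * a) : ℝ) : ℂ) * u a b c
        + Complex.I * (si : ℂ) * Dop2 u a b c
    let H3 : ℝ → ℝ → ℝ → ℂ := fun a b c =>
      ((ω * co * (co + si * cc) * c : ℝ) : ℂ) * u a b c
        + Complex.I * (si : ℂ) * Dop3 u a b c
    ∀ a b c : ℝ,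
      (J1 a b c = -Complex.I * (co : ℂ) * M a b c *
          Dop1 (fun x y z => Mneg x y z * u x y z) a b c ∧
       J2 a b c = -Complex.I * (co : ℂ) * M a b c *
          Dop2 (fun x y z => Mneg x y z * u x y z) a b c ∧
       J3 a b c = -Complex.I * (co : ℂ) * M a b c *
          Dop3 (fun x y z => Mneg x y z * u x y z) a b c) ∧
      (H1 a b c = Complex.I * (si : ℂ) * Q a b c *
          Dop1 (fun x y z => Qneg x y z * u x y z) a b c ∧
       H2 a b c = Complex.I * (si : ℂ) * Q a b c *
          Dop2 (fun x y z => Qneg x y z * u x y z) a b c ∧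
       H3 a b c = Complex.I * (si : ℂ) * Q a b c *
          Dop3 (fun x y z => Qneg x y z * u x y z) a b c) := by
  intro co si cc M Mneg Q Qneg Dop1 Dop2 Dop3 J1 J2 J3 H1 H2 H3 a b c
  have hco : (Real.cos (ω * t) : ℂ) ≠ 0 := Complex.ofReal_ne_zero.mpr hcos
  have hsi : (Real.sin (ω * t) : ℂ) ≠ 0 := Complex.ofReal_ne_zero.mpr hsin
  have hreal : Real.sin (ω * t) = Real.tan (ω * t) * Real.cos (ω * t) := by
    rw [Real.tan_eq_sin_div_cos]; field_simp
  have htan : (si : ℂ) = (Real.tan (ω * t) : ℂ) * (co : ℂ) := by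
    exact_mod_cast congrArg Complex.ofReal hreal
  have hcs : (co : ℂ) / (si : ℂ) * (si : ℂ) = (co : ℂ) := by
    field_simp
    exact mul_div_cancel_right₀ _ hsi
  -- abbreviations
  set T : ℂ := (Real.tan (ω * t) : ℂ) with hT
  have hMnegEq : (fun x y z => Mneg x y z * u x y z)
      = (fun x y z => Complex.exp ((Complex.I * (ω : ℂ) * T / 2)
          * ((x ^ 2 + y ^ 2 + z ^ 2 : ℝ) : ℂ)) * u x y z) := by
    funext x y z
    simp only [Mneg]
    ring_nf
    rw [hT]; ring
  have hQnegEq : (fun x y z => Qneg x y z * u x y z)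
      = (fun x y z => Complex.exp ((-Complex.I * (ω : ℂ) * ((co / si : ℝ) : ℂ) / 2)
          * ((x ^ 2 + y ^ 2 + z ^ 2 : ℝ) : ℂ)) * u x y z) := by
    funext x y z
    simp only [Qneg]
    ring_nf
  have hME : M a b c * Complex.exp ((Complex.I * (ω : ℂ) * T / 2)
      * ((a ^ 2 + b ^ 2 + c ^ 2 : ℝ) : ℂ)) = 1 := by
    simp only [M]
    rw [← Complex.exp_add, show (-Complex.I * (ω : ℂ) * ((a ^ 2 + b ^ 2 + c ^ 2 : ℝ) : ℂ) * T / 2)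
      + (Complex.I * (ω : ℂ) * T / 2) * ((a ^ 2 + b ^ 2 + c ^ 2 : ℝ) : ℂ) = 0 from by ring,
      Complex.exp_zero]
  have hQE : Q a b c * Complex.exp ((-Complex.I * (ω : ℂ) * ((co / si : ℝ) : ℂ) / 2)
      * ((a ^ 2 + b ^ 2 + c ^ 2 : ℝ) : ℂ)) = 1 := by
    simp only [Q]
    rw [← Complex.exp_add, show (Complex.I * (ω : ℂ) * ((a ^ 2 + b ^ 2 + c ^ 2 : ℝ) : ℂ)
        * ((co / si : ℝ) : ℂ) / 2)
      + (-Complex.I * (ω : ℂ) * ((co / si : ℝ) : ℂ) / 2) * ((a ^ 2 + b ^ 2 + c ^ 2 : ℝ) : ℂ) = 0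
      from by ring, Complex.exp_zero]
  push_cast at hME hQE
  have p1M := pd1_exp_mul (Complex.I * (ω : ℂ) * T / 2) u hsmooth a b c
  have p2M := pd2_exp_mul (Complex.I * (ω : ℂ) * T / 2) u hsmooth a b c
  have p3M := pd3_exp_mul (Complex.I * (ω : ℂ) * T / 2) u hsmooth a b c
  have p1Q := pd1_exp_mul (-Complex.I * (ω : ℂ) * ((co / si : ℝ) : ℂ) / 2) u hsmooth a b c
  have p2Q := pd2_exp_mul (-Complex.I * (ω : ℂ) * ((co / si : ℝ) : ℂ) / 2) u hsmooth a b c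
  have p3Q := pd3_exp_mul (-Complex.I * (ω : ℂ) * ((co / si : ℝ) : ℂ) / 2) u hsmooth a b c
  refine ⟨⟨?_, ?_, ?_⟩, ?_, ?_, ?_⟩
  · -- J1
    simp only [J1, Dop1]
    rw [hMnegEq, p1M, p2M]
    push_cast
    linear_combination
      (Complex.I * (co : ℂ) * ((co : ℂ) * ((Complex.I * (ω : ℂ) * T / 2) * (2 * a) * u a b c
          + pd1 u a b c)
        - (si : ℂ) * ((Complex.I * (ω : ℂ) * T / 2) * (2 * b) * u a b c + pd2 u a b c))) * hME
      + ((ω : ℂ) * T * (co : ℂ) * ((co : ℂ) * a - (si : ℂ) * b) * u a b c) * Complex.I_mul_I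
      + ((ω : ℂ) * ((co : ℂ) * a - (si : ℂ) * b) * u a b c) * htan
  · -- J2
    simp only [J2, Dop2]
    rw [hMnegEq, p1M, p2M]
    push_cast
    linear_combination
      (Complex.I * (co : ℂ) * ((co : ℂ) * ((Complex.I * (ω : ℂ) * T / 2) * (2 * b) * u a b c
          + pd2 u a b c)
        + (si : ℂ) * ((Complex.I * (ω : ℂ) * T / 2) * (2 * a) * u a b c + pd1 u a b c))) * hME
      + ((ω : ℂ) * T * (co : ℂ) * ((co : ℂ) * b + (si : ℂ) * a) * u a b c) * Complex.I_mul_I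
      + ((ω : ℂ) * ((co : ℂ) * b + (si : ℂ) * a) * u a b c) * htan
  · -- J3
    simp only [J3, Dop3]
    rw [hMnegEq, p3M]
    push_cast
    linear_combination
      (Complex.I * (co : ℂ) * ((co : ℂ) + (si : ℂ) * (cc : ℂ))
        * ((Complex.I * (ω : ℂ) * T / 2) * (2 * c) * u a b c + pd3 u a b c)) * hME
      + ((ω : ℂ) * T * (co : ℂ) * ((co : ℂ) + (si : ℂ) * (cc : ℂ)) * c * u a b c)
          * Complex.I_mul_I
      + ((ω : ℂ) * ((co : ℂ) + (si : ℂ) * (cc : ℂ)) * c * u a b c) * htan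
  · -- H1
    simp only [H1, Dop1]
    rw [hQnegEq, p1Q, p2Q]
    push_cast
    linear_combination
      (-(Complex.I * (si : ℂ)) * ((co : ℂ)
          * ((-Complex.I * (ω : ℂ) * ((co : ℂ) / (si : ℂ)) / 2) * (2 * a) * u a b c + pd1 u a b c)
        - (si : ℂ) * ((-Complex.I * (ω : ℂ) * ((co : ℂ) / (si : ℂ)) / 2) * (2 * b) * u a b c
          + pd2 u a b c))) * hQE
      + ((si : ℂ) * (ω : ℂ) * ((co : ℂ) / (si : ℂ)) * ((co : ℂ) * a - (si : ℂ) * b) * u a b c)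
          * Complex.I_mul_I
      + (-((ω : ℂ) * ((co : ℂ) * a - (si : ℂ) * b) * u a b c)) * hcs
  · -- H2
    simp only [H2, Dop2]
    rw [hQnegEq, p1Q, p2Q]
    push_cast
    linear_combination
      (-(Complex.I * (si : ℂ)) * ((co : ℂ)
          * ((-Complex.I * (ω : ℂ) * ((co : ℂ) / (si : ℂ)) / 2) * (2 * b) * u a b c + pd2 u a b c)
        + (si : ℂ) * ((-Complex.I * (ω : ℂ) * ((co : ℂ) / (si : ℂ)) / 2) * (2 * a) * u a b c
          + pd1 u a b c))) * hQE
      + ((si : ℂ) * (ω : ℂ) * ((co : ℂ) / (si : ℂ)) * ((co : ℂ) * b + (si : ℂ) * a) * u a b c)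
          * Complex.I_mul_I
      + (-((ω : ℂ) * ((co : ℂ) * b + (si : ℂ) * a) * u a b c)) * hcs
  · -- H3
    simp only [H3, Dop3]
    rw [hQnegEq, p3Q]
    push_cast
    linear_combination
      (-(Complex.I * (si : ℂ)) * ((co : ℂ) + (si : ℂ) * (cc : ℂ))
        * ((-Complex.I * (ω : ℂ) * ((co : ℂ) / (si : ℂ)) / 2) * (2 * c) * u a b c
          + pd3 u a b c)) * hQE
      + ((si : ℂ) * (ω : ℂ) * ((co : ℂ) / (si : ℂ)) * ((co : ℂ) + (si : ℂ) * (cc : ℂ)) * c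
          * u a b c) * Complex.I_mul_I
      + (-((ω : ℂ) * ((co : ℂ) + (si : ℂ) * (cc : ℂ)) * c * u a b c)) * hcs
end
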